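/- Let q ≥ 2, b_n = q^{v_q(n)}, and C_q(n,m) = b_n!/(b_m!·b_{n-m}!). Then for all k ≥ 1, n > m ≥ 0, and 0 ≤ i < j < q^k with i < j: C_q(q^k·n + i, q^k·m + j) = b_n · C_q(n-1, m) · C_q(q^k + i, j). -/

import Mathlib

/-- `b_n = q^{v_q(n)}` for `n ≥ 1`, `b_0 = 0`, as a rational number. -/
noncomputable def bq (q n : ℕ) : ℚ := if n = 0 then 0 else (q : ℚ) ^ Nat.maxPowDiv q n

/-- Generalized factorial `b_n! = ∏_{m=1}^n b_m`. -/
noncomputable def bqfac (q n : ℕ) : ℚ := ∏ m ∈ Finset.Icc 1 n, bq q m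

/-- Generalized binomial coefficient `C_q(n,m)`, `0` for `m > n`. -/
noncomputable def Cq (q n m : ℕ) : ℚ :=
  if m ≤ n then bqfac q n / (bqfac q m * bqfac q (n - m)) else 0

lemma bq_ne_zero {q : ℕ} (hq : 2 ≤ q) {n : ℕ} (hn : n ≠ 0) : bq q n ≠ 0 := by
  unfold bq
  rw [if_neg hn]
  exact pow_ne_zero _ (by exact_mod_cast (by omega : q ≠ 0))

lemma bqfac_ne_zero {q : ℕ} (hq : 2 ≤ q) (n : ℕ) : bqfac q n ≠ 0 := by
  unfold bqfac
  apply Finset.prod_ne_zero_iff.mpr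
  intro m hm
  exact bq_ne_zero hq (by simp [Finset.mem_Icc] at hm; omega)

lemma bqfac_zero (q : ℕ) : bqfac q 0 = 1 := by simp [bqfac]

lemma bqfac_succ (q n : ℕ) : bqfac q (n + 1) = bqfac q n * bq q (n + 1) := by
  unfold bqfac
  exact Finset.prod_Icc_succ_top (by omega : 1 ≤ n + 1) _

lemma maxPowDiv_shift {q : ℕ} (hq : 2 ≤ q) {k r : ℕ} (l : ℕ) (hr : 0 < r) (hrk : r < q ^ k) :
    Nat.maxPowDiv q (q ^ k * l + r) = Nat.maxPowDiv q r := by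
  have hq1 : 1 < q := hq
  have hd : Nat.maxPowDiv q r < k := by
    have h1 : q ^ Nat.maxPowDiv q r ∣ r := Nat.maxPowDiv.pow_dvd (p := q) (n := r)
    have h2 : q ^ Nat.maxPowDiv q r ≤ r := Nat.le_of_dvd hr h1
    exact (Nat.pow_lt_pow_iff_right hq1).mp (lt_of_le_of_lt h2 hrk)
  apply le_antisymm
  · set e := Nat.maxPowDiv q (q ^ k * l + r) with he
    have h1 : q ^ e ∣ q ^ k * l + r := Nat.maxPowDiv.pow_dvd
    have h2 : q ^ min e k ∣ r := by
      have h3 : q ^ min e k ∣ q ^ k * l + r :=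
        dvd_trans (pow_dvd_pow q (min_le_left e k)) h1
      have h4 : q ^ min e k ∣ q ^ k * l :=
        Dvd.dvd.mul_right (pow_dvd_pow q (min_le_right e k)) l
      have := Nat.dvd_sub h3 h4
      rwa [Nat.add_sub_cancel_left] at this
    have h5 : min e k ≤ Nat.maxPowDiv q r := (Nat.pow_dvd_iff_le_padicValNat (by omega) (by omega)).mp h2
    omega
  · apply (Nat.pow_dvd_iff_le_padicValNat (n := q ^ k * l + r) (by omega) (by positivity)).mp
    apply Nat.dvd_add
    · exact Dvd.dvd.mul_right (pow_dvd_pow q (le_of_lt hd)) l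
    · exact Nat.maxPowDiv.pow_dvd (p := q) (n := r)

lemma bq_shift {q : ℕ} (hq : 2 ≤ q) {k r : ℕ} (l : ℕ) (hr : 0 < r) (hrk : r < q ^ k) :
    bq q (q ^ k * l + r) = bq q r := by
  unfold bq
  rw [if_neg (by omega), if_neg (by omega), maxPowDiv_shift hq l hr hrk]

lemma bq_top {q : ℕ} (hq : 2 ≤ q) {l : ℕ} (hl : 0 < l) (k : ℕ) :
    bq q (q ^ k * l) = (q : ℚ) ^ k * bq q l := by
  unfold bq
  have h0 : q ^ k * l ≠ 0 := by positivity
  rw [if_neg h0, if_neg (by omega), show Nat.maxPowDiv q (q ^ k * l) = Nat.maxPowDiv q l + k from Nat.maxPowDiv.base_pow_mul hq (by omega) k, pow_add]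
  ring

lemma bqfac_block {q : ℕ} (hq : 2 ≤ q) {k : ℕ} (l : ℕ) :
    ∀ i, i < q ^ k → bqfac q (q ^ k * l + i) = bqfac q (q ^ k * l) * bqfac q i := by
  intro i
  induction i with
  | zero => intro _; simp [bqfac_zero]
  | succ i ih =>
    intro hi
    rw [← Nat.add_assoc, bqfac_succ, ih (by omega), bqfac_succ,
      show q ^ k * l + i + 1 = q ^ k * l + (i + 1) from by omega,
      bq_shift hq l (by omega) hi]
    ring

lemma bqfac_mul {q : ℕ} (hq : 2 ≤ q) {k : ℕ} (hk : 1 ≤ k) :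
    ∀ n, bqfac q (q ^ k * n) = (bqfac q (q ^ k - 1) * (q : ℚ) ^ k) ^ n * bqfac q n := by
  have hqk : 2 ≤ q ^ k := by
    calc 2 = 2 ^ 1 := rfl
    _ ≤ q ^ k := Nat.pow_le_pow_left hq k |>.trans' (Nat.pow_le_pow_right (by omega) hk) |>.trans (le_refl _)
  intro n
  induction n with
  | zero => simp [bqfac_zero]
  | succ n ih =>
    have h1 : q ^ k * (n + 1) = q ^ k * n + (q ^ k - 1) + 1 := by
      have : 1 ≤ q ^ k := by omega
      ring_nf
      omega
    rw [h1, bqfac_succ, ← h1, bqfac_block hq n _ (by omega), bq_top hq (by omega) k,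
      bqfac_succ, ih]
    ring

theorem stmt5 (q : ℕ) (hq : 2 ≤ q) (k n m i j : ℕ) (hk : 1 ≤ k)
    (hmn : m < n) (hij : i < j) (hj : j < q ^ k) :
    Cq q (q ^ k * n + i) (q ^ k * m + j) =
      bq q n * Cq q (n - 1) m * Cq q (q ^ k + i) j := by
  obtain ⟨d, rfl⟩ : ∃ d, n = m + 1 + d := ⟨n - m - 1, by omega⟩
  have hqk : 2 ≤ q ^ k := by
    calc 2 = 2 ^ 1 := rfl
    _ ≤ q ^ 1 := Nat.pow_le_pow_left hq 1
    _ ≤ q ^ k := Nat.pow_le_pow_right (by omega) hk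
  have hi : i < q ^ k := lt_trans hij hj
  -- index arithmetic
  have hle : q ^ k * m + j ≤ q ^ k * (m + 1 + d) + i := by
    have : q ^ k * (m + 1 + d) = q ^ k * m + q ^ k + q ^ k * d := by ring
    omega
  have hsub : q ^ k * (m + 1 + d) + i - (q ^ k * m + j) = q ^ k * d + (q ^ k + i - j) := by
    have h1 : q ^ k * (m + 1 + d) = q ^ k * m + q ^ k + q ^ k * d := by ring
    omega
  have hsub2 : q ^ k + i - j < q ^ k := by omega
  have hsub2' : 0 < q ^ k + i - j := by omega
  have hone : bqfac q 1 = 1 := by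
    rw [show (1:ℕ) = 0 + 1 from rfl, bqfac_succ, bqfac_zero]
    have hd1 : Nat.maxPowDiv q 1 = 0 := by
      have h : q ^ Nat.maxPowDiv q 1 ∣ 1 := Nat.maxPowDiv.pow_dvd (p := q) (n := 1)
      have h2 := Nat.le_of_dvd one_pos h
      by_contra hne
      have : 2 ≤ q ^ Nat.maxPowDiv q 1 := by
        calc 2 ≤ q := hq
        _ = q ^ 1 := (pow_one q).symm
        _ ≤ q ^ Nat.maxPowDiv q 1 := Nat.pow_le_pow_right (by omega) (by omega)
      omega
    simp [bq, hd1]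
  -- expand everything
  set A := bqfac q (q ^ k - 1) with hAdef
  set Q := (q : ℚ) ^ k with hQdef
  have E1 : bqfac q (q ^ k * (m + 1 + d) + i)
      = (A * Q) ^ (m + 1 + d) * (bqfac q (m + d) * bq q (m + 1 + d)) * bqfac q i := by
    rw [bqfac_block hq _ _ hi, bqfac_mul hq hk,
      show m + 1 + d = (m + d) + 1 from by omega, bqfac_succ,
      show m + d + 1 = m + 1 + d from by omega]
  have E2 : bqfac q (q ^ k * m + j) = (A * Q) ^ m * bqfac q m * bqfac q j := by
    rw [bqfac_block hq _ _ hj, bqfac_mul hq hk, mul_assoc]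
  have E3 : bqfac q (q ^ k * d + (q ^ k + i - j))
      = (A * Q) ^ d * bqfac q d * bqfac q (q ^ k + i - j) := by
    rw [bqfac_block hq _ _ hsub2, bqfac_mul hq hk, mul_assoc]
  have E4 : bqfac q (q ^ k + i) = A * Q * bqfac q i := by
    rw [show q ^ k + i = q ^ k * 1 + i from by ring, bqfac_block hq _ _ hi,
      bqfac_mul hq hk, hone, pow_one, mul_one]
  rw [Cq, Cq, Cq, if_pos hle, if_pos (by omega : m ≤ m + 1 + d - 1),
    if_pos (by omega : j ≤ q ^ k + i), hsub,
    show m + 1 + d - 1 = m + d from by omega,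
    show m + d - m = d from by omega,
    E1, E2, E3, E4]
  have hA : A ≠ 0 := bqfac_ne_zero hq (q ^ k - 1)
  have hQ : Q ≠ 0 := pow_ne_zero _ (by exact_mod_cast (by omega : q ≠ 0))
  have h1 := bqfac_ne_zero hq m
  have h2 := bqfac_ne_zero hq d
  have h3 := bqfac_ne_zero hq j
  have h4 := bqfac_ne_zero hq (q ^ k + i - j)
  have h5 := bqfac_ne_zero hq (m + d)
  have h6 := bqfac_ne_zero hq i
  field_simp
  ring
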